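/- Fixed points of the quantum embedding of Glauber dynamics. In the Glauber setup, a density matrix ρ on 𝒜 satisfies 𝓛_Λ(ρ) = 0 if and only if ρ is diagonal in the computational basis, ρ = Σ_{σ∈Ω} p(σ)|σ⟩⟨σ|, with p a probability distribution on Ω that is stationary for the classical Glauber generator, i.e. Σ_{x∈Λ} c(x,σ^x) p(σ^x) = p(σ) Σ_{x∈Λ} c(x,σ) for every σ ∈ Ω (equivalently, p is a stationary distribution of the Markov generator (Q_Λ f)(σ) = Σ_{x∈Λ} c(x,σ)(f(σ^x) − f(σ))). -/

import Mathlib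

open scoped BigOperators Kronecker ComplexOrder
open Matrix

noncomputable section

namespace DissipStab

variable {ι κ κ' : Type*}

/-- The operator (`∞→∞`) norm of a matrix, via its action on Euclidean space. -/
def opNorm [Fintype ι] [DecidableEq ι] (M : Matrix ι ι ℂ) : ℝ :=
  ⨆ x : {x : EuclideanSpace ℂ ι // ‖x‖ ≤ 1}, ‖Matrix.toEuclideanLin M x.1‖

/-- The trace (Schatten `1`) norm of a matrix. -/
def traceNorm [Fintype ι] [DecidableEq ι] (M : Matrix ι ι ℂ) : ℝ :=
  (((Matrix.isHermitian_conjTranspose_mul_self M).eigenvectorUnitary.1 *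
      Matrix.diagonal ((fun t : ℝ => ((Real.sqrt t : ℝ) : ℂ)) ∘
        (Matrix.isHermitian_conjTranspose_mul_self M).eigenvalues) *
      (star (Matrix.isHermitian_conjTranspose_mul_self M).eigenvectorUnitary :
        Matrix ι ι ℂ)).trace).re

/-- The amplification `T ⊗ id` of a superoperator to a tensor factor. -/
def tensorId [Fintype κ] [Fintype κ'] [DecidableEq κ] [DecidableEq κ']
    (T : Matrix κ κ ℂ →ₗ[ℂ] Matrix κ κ ℂ) :
    Matrix (κ × κ') (κ × κ') ℂ →ₗ[ℂ] Matrix (κ × κ') (κ × κ') ℂ where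
  toFun M := Matrix.of fun p q => T (Matrix.of fun k l => M (k, p.2) (l, q.2)) p.1 q.1
  map_add' M N := by
    ext p q
    show T (Matrix.of fun k l => (M + N) (k, p.2) (l, q.2)) p.1 q.1 = _
    rw [show (Matrix.of fun k l => (M + N) (k, p.2) (l, q.2))
        = (Matrix.of fun k l => M (k, p.2) (l, q.2)) +
          (Matrix.of fun k l => N (k, p.2) (l, q.2)) from rfl, map_add]
    rfl
  map_smul' c M := by
    ext p q
    show T (Matrix.of fun k l => (c • M) (k, p.2) (l, q.2)) p.1 q.1 = _
    rw [show (Matrix.of fun k l => (c • M) (k, p.2) (l, q.2))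
        = c • (Matrix.of fun k l => M (k, p.2) (l, q.2)) from rfl, _root_.map_smul]
    rfl

/-- The adjoint (dual) of a superoperator with respect to the trace pairing
`⟨A, B⟩ = tr (Aᴴ B)`. -/
def dualMap [Fintype ι] [DecidableEq ι]
    (T : Matrix ι ι ℂ →ₗ[ℂ] Matrix ι ι ℂ) : Matrix ι ι ℂ →ₗ[ℂ] Matrix ι ι ℂ where
  toFun A := Matrix.of fun i j =>
    (starRingEnd ℂ) (Matrix.trace (Aᴴ * T (Matrix.single i j 1)))
  map_add' A B := by
    ext i j
    simp [Matrix.conjTranspose_add, Matrix.add_mul, Matrix.trace_add, Matrix.add_apply]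
  map_smul' c A := by
    ext i j
    simp [Matrix.conjTranspose_smul, Matrix.smul_mul, Matrix.trace_smul, Matrix.smul_apply,
      mul_comm]

/-- The completely bounded `1→1` norm of a superoperator. -/
def cbNorm1 [Fintype ι] [DecidableEq ι] (T : Matrix ι ι ℂ →ₗ[ℂ] Matrix ι ι ℂ) : ℝ :=
  ⨆ n : ℕ, ⨆ X : {X : Matrix (ι × Fin n) (ι × Fin n) ℂ // traceNorm X ≤ 1},
    traceNorm (tensorId T X.1)

/-- The completely bounded `∞→∞` norm of a superoperator. -/
def cbNormInf [Fintype ι] [DecidableEq ι] (T : Matrix ι ι ℂ →ₗ[ℂ] Matrix ι ι ℂ) : ℝ :=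
  ⨆ n : ℕ, ⨆ X : {X : Matrix (ι × Fin n) (ι × Fin n) ℂ // opNorm X ≤ 1},
    opNorm (tensorId T X.1)

/-- The exponential `e^L` of a superoperator. -/
def expSuper [Fintype ι] [DecidableEq ι]
    (L : Matrix ι ι ℂ →ₗ[ℂ] Matrix ι ι ℂ) : Matrix ι ι ℂ →ₗ[ℂ] Matrix ι ι ℂ :=
  Matrix.toLin (Matrix.stdBasis ℂ ι ι) (Matrix.stdBasis ℂ ι ι)
    (NormedSpace.exp
      (LinearMap.toMatrix (Matrix.stdBasis ℂ ι ι) (Matrix.stdBasis ℂ ι ι) L))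

/-- A density matrix. -/
def IsDensity [Fintype ι] [DecidableEq ι] (ρ : Matrix ι ι ℂ) : Prop :=
  ρ.PosSemidef ∧ ρ.trace = 1

/-- A superoperator in GKLS (Lindblad) form. -/
def IsLindbladian [Fintype ι] [DecidableEq ι]
    (𝓛 : Matrix ι ι ℂ →ₗ[ℂ] Matrix ι ι ℂ) : Prop :=
  ∃ (H : Matrix ι ι ℂ) (n : ℕ) (L : Fin n → Matrix ι ι ℂ), H.IsHermitian ∧
    ∀ ρ, 𝓛 ρ = Complex.I • (ρ * H - H * ρ) +
      ∑ j, (L j * ρ * (L j)ᴴ -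
        (1/2 : ℂ) • ((L j)ᴴ * L j * ρ + ρ * ((L j)ᴴ * L j)))

/-- `P` is the spectral projection of `L` associated with the set `S` of eigenvalues:
it commutes with `L`, is idempotent, acts as the identity on all generalized eigenspaces
with eigenvalue in `S`, and kills all generalized eigenspaces with eigenvalue outside `S`. -/
def IsSpectralProjOn [Fintype ι] [DecidableEq ι]
    (L P : Matrix ι ι ℂ →ₗ[ℂ] Matrix ι ι ℂ) (S : Set ℂ) : Prop :=
  P ∘ₗ L = L ∘ₗ P ∧ P ∘ₗ P = P ∧
  (∀ μ ∈ S, ∀ v ∈ Module.End.maxGenEigenspace (L : Module.End ℂ (Matrix ι ι ℂ)) μ, P v = v) ∧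
  (∀ μ ∉ S, ∀ v ∈ Module.End.maxGenEigenspace (L : Module.End ℂ (Matrix ι ι ℂ)) μ, P v = 0)

/-- The contraction coefficient `η` of a CPTP map `T` relative to the projection `P`
onto the periodic subspace: `η = ½ sup_ρ ‖T ρ - T (P ρ)‖₁`, the supremum running
over density matrices. -/
def eta [Fintype ι] [DecidableEq ι]
    (T P : Matrix ι ι ℂ →ₗ[ℂ] Matrix ι ι ℂ) : ℝ :=
  (1/2) * ⨆ ρ : {ρ : Matrix ι ι ℂ // IsDensity ρ}, traceNorm (T ρ.1 - T (P ρ.1))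

/-- An exponentially decaying function. -/
def ExpDecay (g : ℕ → ℝ) : Prop := ∃ c : ℝ, 0 < c ∧ ∀ r : ℕ, g r ≤ Real.exp (-c * r)

/-- A polynomially bounded function. -/
def PolyBound (p : ℕ → ℝ) : Prop := ∃ (C : ℝ) (k : ℕ), ∀ n : ℕ, p n ≤ C * ((n : ℝ) + 1) ^ k

/- ## Glauber dynamics setup -/

/-- A site of the cubic lattice `ℤ^D`. -/
abbrev Site (D : ℕ) := Fin D → ℤ

variable {D : ℕ}

/-- The (ℓ∞) distance between two lattice sites. -/
def distS (u v : Site D) : ℕ := Finset.univ.sup fun i => (u i - v i).natAbs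

/-- Classical spin configurations on `Λ` (spin values `±1` encoded as `Bool`). -/
abbrev GCfg (Λ : Finset (Site D)) := ↥Λ → Bool

/-- The configuration `σ^x` obtained from `σ` by flipping the spin at `x`. -/
def flipAt {Λ : Finset (Site D)} (σ : GCfg Λ) (x : ↥Λ) : GCfg Λ :=
  Function.update σ x (!σ x)

/-- The Hamming distance between two configurations. -/
def hamming {Λ : Finset (Site D)} (α β : GCfg Λ) : ℕ :=
  (Finset.univ.filter fun x => α x ≠ β x).card

/-- The sites of `Λ` at distance at most `r` from `x`. -/
def locBall (Λ : Finset (Site D)) (r : ℕ) (x : ↥Λ) : Finset ↥Λ :=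
  Finset.univ.filter fun y => distS (x : Site D) (y : Site D) ≤ r

/-- The transition rates `c(x, ·)` depend only on the spins in the ball `b_x(r)`. -/
def FiniteRangeRates (Λ : Finset (Site D)) (r : ℕ) (c : ↥Λ → GCfg Λ → ℝ) : Prop :=
  ∀ x σ τ, (∀ y ∈ locBall Λ r x, σ y = τ y) → c x σ = c x τ

/-- Local configurations on the ball `b_x(r) ∩ Λ`. -/
abbrev LocCfg (Λ : Finset (Site D)) (r : ℕ) (x : ↥Λ) := ↥(locBall Λ r x) → Bool

/-- Canonical extension of a local configuration to `Λ`. -/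
def extendLoc {Λ : Finset (Site D)} {r : ℕ} (x : ↥Λ) (η : LocCfg Λ r x) : GCfg Λ :=
  fun y => if h : y ∈ locBall Λ r x then η ⟨y, h⟩ else false

/-- The Lindblad operator `L_{x,η} = √(c(x,η)) |η^x⟩⟨η| ⊗ 𝟙`. -/
def Lop {Λ : Finset (Site D)} (r : ℕ) (c : ↥Λ → GCfg Λ → ℝ) (x : ↥Λ)
    (η : LocCfg Λ r x) : Matrix (GCfg Λ) (GCfg Λ) ℂ :=
  Matrix.of fun σ τ =>
    if (∀ y : ↥(locBall Λ r x), τ y.1 = η y) ∧ σ = flipAt τ x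
    then (Real.sqrt (c x (extendLoc x η)) : ℂ) else 0

/-- Conjugation superoperator `ρ ↦ L ρ R`. -/
def conjAct {ι : Type*} [Fintype ι] [DecidableEq ι] (L R : Matrix ι ι ℂ) :
    Matrix ι ι ℂ →ₗ[ℂ] Matrix ι ι ℂ :=
  (LinearMap.mulLeft ℂ L).comp (LinearMap.mulRight ℂ R)

/-- The anticommutator superoperator `ρ ↦ ½ {K, ρ}`. -/
def anticommHalf {ι : Type*} [Fintype ι] [DecidableEq ι] (K : Matrix ι ι ℂ) :
    Matrix ι ι ℂ →ₗ[ℂ] Matrix ι ι ℂ :=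
  (1/2 : ℂ) • (LinearMap.mulLeft ℂ K + LinearMap.mulRight ℂ K)

/-- The diagonal matrix `K = ∑_σ (∑_x c(x,σ)) |σ⟩⟨σ|`. -/
def Kmat {Λ : Finset (Site D)} (c : ↥Λ → GCfg Λ → ℝ) : Matrix (GCfg Λ) (GCfg Λ) ℂ :=
  Matrix.diagonal fun σ => ((∑ x : ↥Λ, c x σ : ℝ) : ℂ)

/-- The quantum embedding of the classical Glauber dynamics:
`𝓛_Λ(ρ) = ∑_x ∑_η L_{x,η} ρ L_{x,η}† − ½{K, ρ}`. -/
def glauberGen {Λ : Finset (Site D)} (r : ℕ) (c : ↥Λ → GCfg Λ → ℝ) :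
    Matrix (GCfg Λ) (GCfg Λ) ℂ →ₗ[ℂ] Matrix (GCfg Λ) (GCfg Λ) ℂ :=
  (∑ x : ↥Λ, ∑ η : LocCfg Λ r x, conjAct (Lop r c x η) (Lop r c x η)ᴴ)
    - anticommHalf (Kmat c)

/-- The projector `|η⟩⟨η| ⊗ 𝟙` onto the local configuration `η`, weighted by `c(x,η)`. -/
def etaProjMat {Λ : Finset (Site D)} (r : ℕ) (c : ↥Λ → GCfg Λ → ℝ) (x : ↥Λ)
    (η : LocCfg Λ r x) : Matrix (GCfg Λ) (GCfg Λ) ℂ :=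
  Matrix.diagonal fun σ =>
    if ∀ y : ↥(locBall Λ r x), σ y.1 = η y then (c x (extendLoc x η) : ℂ) else 0

/-- The local Lindblad term `𝓛_{x,η}(ρ) = L_{x,η} ρ L_{x,η}† − ½{c(x,η)|η⟩⟨η|⊗𝟙, ρ}`. -/
def locLind {Λ : Finset (Site D)} (r : ℕ) (c : ↥Λ → GCfg Λ → ℝ) (x : ↥Λ)
    (η : LocCfg Λ r x) : Matrix (GCfg Λ) (GCfg Λ) ℂ →ₗ[ℂ] Matrix (GCfg Λ) (GCfg Λ) ℂ :=
  conjAct (Lop r c x η) (Lop r c x η)ᴴ - anticommHalf (etaProjMat r c x η)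

/-- The projection `P_{x,i} = (|i⟩⟨i|)_x ⊗ 𝟙` of site `x` onto spin value `i`. -/
def projSpin {Λ : Finset (Site D)} (x : ↥Λ) (i : Bool) : Matrix (GCfg Λ) (GCfg Λ) ℂ :=
  Matrix.diagonal fun σ => if σ x = i then 1 else 0

/-- The uniform dephasing generator
`𝒟(ρ) = γ ∑_x ∑_i P_{x,i} ρ P_{x,i} − γ|Λ| ρ`. -/
def dephasing {Λ : Finset (Site D)} (γ : ℝ) :
    Matrix (GCfg Λ) (GCfg Λ) ℂ →ₗ[ℂ] Matrix (GCfg Λ) (GCfg Λ) ℂ :=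
  (γ : ℂ) • ((∑ x : ↥Λ, ∑ i : Bool, conjAct (projSpin x i) (projSpin x i))
    - (Λ.card : ℂ) • LinearMap.id)

/-- The projection `𝒞` onto diagonal matrices (in the computational basis). -/
def diagProj {Λ : Finset (Site D)} :
    Matrix (GCfg Λ) (GCfg Λ) ℂ →ₗ[ℂ] Matrix (GCfg Λ) (GCfg Λ) ℂ where
  toFun ρ := Matrix.diagonal fun σ => ρ σ σ
  map_add' ρ τ := by
    ext i j
    by_cases h : i = j <;> simp [Matrix.diagonal_apply, h, Matrix.add_apply]
  map_smul' a ρ := by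
    ext i j
    by_cases h : i = j <;> simp [Matrix.diagonal_apply, h, Matrix.smul_apply]

/-!
In the computational basis `𝓛_Λ` acts entrywise:
`(𝓛_Λ ρ)(α, β) = ∑_{x : α = β on b_x(r)} c(x, α^x) ρ(α^x, β^x) - ½ (k(α) + k(β)) ρ(α, β)`
with `k(σ) = ∑_x c(x, σ)`. On diagonal matrices this is the classical master equation, and
no off-diagonal entries are produced.

Conversely, let `𝓛_Λ ρ = 0`. Take moduli in the entrywise equation and sum over all pairs
`(α, β)`. For each `x`, `(α, β) ↦ (α^x, β^x)` is a bijection preserving agreement on `b_x(r)`,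
and finite range gives `c(x, α) = c(x, β)` whenever `α = β` on `b_x(r)`; what is left is
`∑_{α, β} |ρ(α, β)| · ½ ∑_{x : α ≠ β on b_x(r)} (c(x, α) + c(x, β)) ≤ 0`.
For `α ≠ β` the weight is positive (take `x` with `α x ≠ β x`), so `ρ` is diagonal.
-/

theorem IsDensity.exists_eq_diagonal_of_isDiag [Fintype ι] [DecidableEq ι]
    {ρ : Matrix ι ι ℂ} (hρ : IsDensity ρ) (hdiag : ρ.IsDiag) :
    ∃ p : ι → ℝ, (∀ i, 0 ≤ p i) ∧ ∑ i, p i = 1 ∧ ρ = Matrix.diagonal fun i => (p i : ℂ) := by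
  have hre : ∀ i, ((ρ i i).re : ℂ) = ρ i i := hρ.1.1.coe_re_apply_self
  refine ⟨fun i => (ρ i i).re, fun i => (Complex.nonneg_iff.mp hρ.1.diag_nonneg).1, ?_, ?_⟩
  · have htrace : ((∑ i, (ρ i i).re : ℝ) : ℂ) = 1 := by
      push_cast
      simp only [hre]
      exact hρ.2
    exact_mod_cast htrace
  · conv_lhs => rw [← hdiag.diagonal_diag]
    simp only [hre]
    rfl

theorem mul_mul_conjTranspose_apply_of_eq_ite [Fintype ι] [DecidableEq ι]
    {L : Matrix ι ι ℂ} {f : ι → ι} {a : ι → ℂ}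
    (hL : ∀ i j, L i j = if j = f i then a i else 0) (ρ : Matrix ι ι ℂ) (i j : ι) :
    (L * (ρ * Lᴴ)) i j = a i * ρ (f i) (f j) * star (a j) := by
  simp [Matrix.mul_apply, Matrix.conjTranspose_apply, hL, mul_assoc, apply_ite (starRingEnd ℂ)]

section Glauber

variable {Λ : Finset (Site D)} {r : ℕ} {c : ↥Λ → GCfg Λ → ℝ}

@[simp]
theorem flipAt_flipAt (σ : GCfg Λ) (x : ↥Λ) : flipAt (flipAt σ x) x = σ := by
  ext y
  by_cases h : y = x
  · subst h; simp [flipAt]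
  · simp [flipAt, Function.update_of_ne h]

theorem flipAt_involutive (x : ↥Λ) : Function.Involutive (flipAt · x) :=
  fun σ => flipAt_flipAt σ x

@[simp]
theorem flipAt_inj {α β : GCfg Λ} {x : ↥Λ} : flipAt α x = flipAt β x ↔ α = β :=
  (flipAt_involutive x).injective.eq_iff

theorem flipAt_apply_eq_flipAt_apply_iff (α β : GCfg Λ) (x y : ↥Λ) :
    flipAt α x y = flipAt β x y ↔ α y = β y := by
  by_cases h : y = x
  · subst h; simp [flipAt]
  · simp [flipAt, Function.update_of_ne h]

theorem mem_locBall_self (x : ↥Λ) : x ∈ locBall Λ r x := by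
  simp [locBall, distS]

theorem restrict_flipAt_eq_iff (x : ↥Λ) (α β : GCfg Λ) :
    (locBall Λ r x).restrict (flipAt α x) = (locBall Λ r x).restrict (flipAt β x) ↔
      ∀ y ∈ locBall Λ r x, α y = β y := by
  simp [funext_iff, Finset.restrict, flipAt_apply_eq_flipAt_apply_iff]

theorem FiniteRangeRates.apply_extendLoc_restrict (hrange : FiniteRangeRates Λ r c)
    (x : ↥Λ) (σ : GCfg Λ) : c x (extendLoc x ((locBall Λ r x).restrict σ)) = c x σ :=
  hrange x _ _ fun y hy => by simp [extendLoc, hy]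

theorem Lop_apply (x : ↥Λ) (η : LocCfg Λ r x) (α σ : GCfg Λ) :
    Lop r c x η α σ = if σ = flipAt α x then
      (if (locBall Λ r x).restrict (flipAt α x) = η then
        (Real.sqrt (c x (extendLoc x η)) : ℂ) else 0) else 0 := by
  rw [Lop, Matrix.of_apply]
  by_cases hσ : σ = flipAt α x
  · subst hσ
    simp [funext_iff, Finset.restrict]
  · have hα : α ≠ flipAt σ x := fun h => hσ (by rw [h, flipAt_flipAt])
    simp [hσ, hα]

theorem sum_conjAct_Lop_apply (hc : ∀ x σ, 0 ≤ c x σ) (hrange : FiniteRangeRates Λ r c)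
    (x : ↥Λ) (ρ : Matrix (GCfg Λ) (GCfg Λ) ℂ) (α β : GCfg Λ) :
    (∑ η : LocCfg Λ r x, conjAct (Lop r c x η) (Lop r c x η)ᴴ ρ) α β =
      if ∀ y ∈ locBall Λ r x, α y = β y then
        (c x (flipAt α x) : ℂ) * ρ (flipAt α x) (flipAt β x) else 0 := by
  simp only [Matrix.sum_apply, conjAct, LinearMap.comp_apply, LinearMap.mulLeft_apply,
    LinearMap.mulRight_apply, mul_mul_conjTranspose_apply_of_eq_ite (Lop_apply x _)]
  rw [Fintype.sum_eq_single ((locBall Λ r x).restrict (flipAt α x)) fun η hη => by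
    simp [Ne.symm hη]]
  by_cases h : ∀ y ∈ locBall Λ r x, α y = β y
  · rw [if_pos h, ← (restrict_flipAt_eq_iff x α β).mpr h]
    simp only [hrange.apply_extendLoc_restrict, if_true, Complex.star_def, Complex.conj_ofReal]
    rw [mul_right_comm, ← Complex.ofReal_mul, Real.mul_self_sqrt (hc x _)]
  · have h' := mt (restrict_flipAt_eq_iff x α β).mp h
    rw [if_neg h]
    simp [Ne.symm h']

theorem glauberGen_apply (hc : ∀ x σ, 0 ≤ c x σ) (hrange : FiniteRangeRates Λ r c)
    (ρ : Matrix (GCfg Λ) (GCfg Λ) ℂ) (α β : GCfg Λ) :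
    glauberGen r c ρ α β =
      (∑ x, if ∀ y ∈ locBall Λ r x, α y = β y then
        (c x (flipAt α x) : ℂ) * ρ (flipAt α x) (flipAt β x) else 0) -
      ((∑ x, (c x α + c x β) / 2 : ℝ) : ℂ) * ρ α β := by
  simp only [glauberGen, LinearMap.sub_apply, LinearMap.sum_apply, Matrix.sub_apply,
    Matrix.sum_apply, ← sum_conjAct_Lop_apply hc hrange]
  congr 1
  simp only [anticommHalf, Kmat, LinearMap.smul_apply, LinearMap.add_apply,
    LinearMap.mulLeft_apply, LinearMap.mulRight_apply, Matrix.smul_apply, Matrix.add_apply,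
    Matrix.diagonal_mul, Matrix.mul_diagonal, smul_eq_mul]
  push_cast
  rw [← Finset.sum_div, Finset.sum_add_distrib]
  ring

theorem sum_sum_flipAt {M : Type*} [AddCommMonoid M] (F : GCfg Λ → GCfg Λ → M) (x : ↥Λ) :
    ∑ α, ∑ β, F (flipAt α x) (flipAt β x) = ∑ α, ∑ β, F α β := by
  have hbij := (flipAt_involutive x).bijective
  simp only [hbij.sum_comp (F _)]
  exact hbij.sum_comp fun α => ∑ β, F α β

theorem ite_agree_rate_le (hc : ∀ x σ, 0 ≤ c x σ) (hrange : FiniteRangeRates Λ r c)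
    (x : ↥Λ) (α β : GCfg Λ) :
    (if ∀ y ∈ locBall Λ r x, α y = β y then c x α else 0) ≤ (c x α + c x β) / 2 := by
  split_ifs with h
  · rw [hrange x α β h]; linarith
  · linarith [hc x α, hc x β]

theorem ite_agree_rate_lt (hc : ∀ x σ, 0 < c x σ) {x : ↥Λ} {α β : GCfg Λ} (hx : α x ≠ β x) :
    (if ∀ y ∈ locBall Λ r x, α y = β y then c x α else 0) < (c x α + c x β) / 2 := by
  rw [if_neg fun h => hx (h x (mem_locBall_self x))]
  linarith [hc x α, hc x β]

theorem norm_le_of_glauberGen_eq_zero (hc : ∀ x σ, 0 ≤ c x σ) (hrange : FiniteRangeRates Λ r c)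
    {ρ : Matrix (GCfg Λ) (GCfg Λ) ℂ} (h : glauberGen r c ρ = 0) (α β : GCfg Λ) :
    (∑ x, (c x α + c x β) / 2) * ‖ρ α β‖ ≤
      ∑ x, if ∀ y ∈ locBall Λ r x, α y = β y then
        c x (flipAt α x) * ‖ρ (flipAt α x) (flipAt β x)‖ else 0 := by
  have hentry := glauberGen_apply hc hrange ρ α β
  rw [h, Matrix.zero_apply, eq_comm, sub_eq_zero] at hentry
  have hcoef : 0 ≤ ∑ x, (c x α + c x β) / 2 :=
    Finset.sum_nonneg fun x _ => by linarith [hc x α, hc x β]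
  calc (∑ x, (c x α + c x β) / 2) * ‖ρ α β‖
      = ‖((∑ x, (c x α + c x β) / 2 : ℝ) : ℂ) * ρ α β‖ := by
        rw [norm_mul, Complex.norm_real, Real.norm_of_nonneg hcoef]
    _ ≤ _ := by
        rw [← hentry]
        refine (norm_sum_le _ _).trans (Finset.sum_le_sum fun x _ => ?_)
        split_ifs
        · rw [norm_mul, Complex.norm_real, Real.norm_of_nonneg (hc x _)]
        · simp

theorem sum_sum_ite_agree_flipAt (N : GCfg Λ → GCfg Λ → ℝ) (x : ↥Λ) :
    ∑ α, ∑ β, (if ∀ y ∈ locBall Λ r x, α y = β y then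
        c x (flipAt α x) * N (flipAt α x) (flipAt β x) else 0) =
      ∑ α, ∑ β, (if ∀ y ∈ locBall Λ r x, α y = β y then c x α else 0) * N α β := by
  rw [← sum_sum_flipAt _ x]
  simp only [flipAt_flipAt, flipAt_apply_eq_flipAt_apply_iff, ite_mul, zero_mul]

theorem isDiag_of_glauberGen_eq_zero (hc : ∀ x σ, 0 < c x σ) (hrange : FiniteRangeRates Λ r c)
    {ρ : Matrix (GCfg Λ) (GCfg Λ) ℂ} (h : glauberGen r c ρ = 0) : ρ.IsDiag := by
  by_contra hdiag
  obtain ⟨α₀, β₀, hne, hρ₀⟩ : ∃ α β, α ≠ β ∧ ρ α β ≠ 0 := by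
    simpa [Matrix.IsDiag, Pairwise] using hdiag
  obtain ⟨x₀, hx₀⟩ := Function.ne_iff.mp hne
  have hc' : ∀ x σ, 0 ≤ c x σ := fun x σ => (hc x σ).le
  let N α β := ‖ρ α β‖
  have hpair : ∀ α β,
      (∑ x, if ∀ y ∈ locBall Λ r x, α y = β y then c x α else 0) * N α β ≤
        (∑ x, (c x α + c x β) / 2) * N α β := fun α β =>
    mul_le_mul_of_nonneg_right
      (Finset.sum_le_sum fun x _ => ite_agree_rate_le hc' hrange x α β) (norm_nonneg _)
  have hlt : ∑ α, ∑ β, (∑ x, if ∀ y ∈ locBall Λ r x, α y = β y then c x α else 0) * N α β <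
      ∑ α, ∑ β, (∑ x, (c x α + c x β) / 2) * N α β := by
    refine Finset.sum_lt_sum (fun α _ => Finset.sum_le_sum fun β _ => hpair α β)
      ⟨α₀, Finset.mem_univ _,
        Finset.sum_lt_sum (fun β _ => hpair α₀ β) ⟨β₀, Finset.mem_univ _, ?_⟩⟩
    refine mul_lt_mul_of_pos_right ?_ (norm_pos_iff.mpr hρ₀)
    exact Finset.sum_lt_sum (fun x _ => ite_agree_rate_le hc' hrange x α₀ β₀)
      ⟨x₀, Finset.mem_univ _, ite_agree_rate_lt hc hx₀⟩
  have hle : ∑ α, ∑ β, (∑ x, (c x α + c x β) / 2) * N α β ≤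
      ∑ α, ∑ β, (∑ x, if ∀ y ∈ locBall Λ r x, α y = β y then c x α else 0) * N α β :=
    calc _ ≤ ∑ α, ∑ β, ∑ x, (if ∀ y ∈ locBall Λ r x, α y = β y then
            c x (flipAt α x) * N (flipAt α x) (flipAt β x) else 0) :=
          Finset.sum_le_sum fun α _ => Finset.sum_le_sum fun β _ =>
            norm_le_of_glauberGen_eq_zero hc' hrange h α β
      _ = ∑ x, ∑ α, ∑ β, (if ∀ y ∈ locBall Λ r x, α y = β y then
            c x (flipAt α x) * N (flipAt α x) (flipAt β x) else 0) := by
          simp only [Finset.sum_comm (γ := ↥Λ)]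
      _ = _ := by
          simp only [sum_sum_ite_agree_flipAt, Finset.sum_mul]
          simp only [Finset.sum_comm (γ := ↥Λ)]
  exact (hlt.trans_le hle).false

theorem glauberGen_diagonal_eq_zero_iff (hc : ∀ x σ, 0 ≤ c x σ)
    (hrange : FiniteRangeRates Λ r c) (p : GCfg Λ → ℝ) :
    glauberGen r c (Matrix.diagonal fun σ => (p σ : ℂ)) = 0 ↔
      ∀ σ, ∑ x, c x (flipAt σ x) * p (flipAt σ x) = p σ * ∑ x, c x σ := by
  have hoff : ∀ α β, α ≠ β → glauberGen r c (Matrix.diagonal fun σ => (p σ : ℂ)) α β = 0 := by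
    intro α β hne
    rw [glauberGen_apply hc hrange, Matrix.diagonal_apply_ne _ hne, mul_zero, sub_zero]
    refine Finset.sum_eq_zero fun x _ => ?_
    rw [Matrix.diagonal_apply_ne _ (flipAt_inj.not.mpr hne), mul_zero, ite_self]
  have hdiag : ∀ σ, glauberGen r c (Matrix.diagonal fun σ => (p σ : ℂ)) σ σ =
      ((∑ x, c x (flipAt σ x) * p (flipAt σ x) - p σ * ∑ x, c x σ : ℝ) : ℂ) := by
    intro σ
    simp only [glauberGen_apply hc hrange, Matrix.diagonal_apply_eq, implies_true, if_true]
    push_cast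
    ring
  constructor
  · intro h σ
    have hσ := hdiag σ
    rwa [h, Matrix.zero_apply, eq_comm, Complex.ofReal_eq_zero, sub_eq_zero] at hσ
  · intro h
    ext α β
    rcases eq_or_ne α β with rfl | hne
    · rw [hdiag, h, sub_self, Complex.ofReal_zero, Matrix.zero_apply]
    · exact hoff α β hne

end Glauber

/-- **Fixed points of the quantum embedding of Glauber dynamics.** A density matrix `ρ`
satisfies `𝓛_Λ(ρ) = 0` if and only if `ρ` is diagonal in the computational basis,
`ρ = ∑_σ p(σ)|σ⟩⟨σ|`, with `p` a probability distribution which is stationary for the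
classical Glauber generator. -/
theorem glauber_fixed_points
    {D : ℕ} (Λ : Finset (Site D)) (r : ℕ) (c : ↥Λ → GCfg Λ → ℝ)
    (cm cM : ℝ) (hcm : 0 < cm)
    (hbound : ∀ (x : ↥Λ) (σ : GCfg Λ), cm ≤ c x σ ∧ c x σ ≤ cM)
    (hrange : FiniteRangeRates Λ r c)
    (ρ : Matrix (GCfg Λ) (GCfg Λ) ℂ) (hρ : IsDensity ρ) :
    glauberGen r c ρ = 0 ↔
      ∃ p : GCfg Λ → ℝ, (∀ σ, 0 ≤ p σ) ∧ (∑ σ, p σ = 1) ∧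
        ρ = Matrix.diagonal (fun σ => (p σ : ℂ)) ∧
        ∀ σ : GCfg Λ, ∑ x : ↥Λ, c x (flipAt σ x) * p (flipAt σ x) =
          p σ * ∑ x : ↥Λ, c x σ := by
  have hc : ∀ x σ, 0 < c x σ := fun x σ => hcm.trans_le (hbound x σ).1
  have hc' : ∀ x σ, 0 ≤ c x σ := fun x σ => (hc x σ).le
  constructor
  · intro h
    obtain ⟨p, hp0, hp1, rfl⟩ :=
      hρ.exists_eq_diagonal_of_isDiag (isDiag_of_glauberGen_eq_zero hc hrange h)
    exact ⟨p, hp0, hp1, rfl, (glauberGen_diagonal_eq_zero_iff hc' hrange p).mp h⟩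
  · rintro ⟨p, -, -, rfl, hstat⟩
    exact (glauberGen_diagonal_eq_zero_iff hc' hrange p).mpr hstat

end DissipStab
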